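/- Let k ≥ n − 3 and let x_0,…,x_{n−1} be an ordering of V(C_n). A function f: V(C_n) → N_0 with f(x_0) < f(x_1) < ⋯ < f(x_{n−1}) is a radio-k-labeling of C_n if and only if f(x_{i+1}) − f(x_i) ≥ k − d(x_i, x_{i+1}) + 1 for all i ∈ [0, n−2]. -/

import Mathlib

/-- Distance between two vertices of the cycle `C_n` (vertices are `Fin n`). -/
def cycleDist (n : ℕ) (u v : Fin n) : ℕ := min (v - u).val (u - v).val

/-- A radio-`k`-labeling of the cycle `C_n`. -/
def IsRadioLabeling (n k : ℕ) (f : Fin n → ℕ) : Prop :=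
  ∀ u v : Fin n, u ≠ v → (k : ℤ) + 1 - cycleDist n u v ≤ |(f u : ℤ) - (f v : ℤ)|

/-- The span of a labeling: largest label minus smallest label. -/
def spanOf (n : ℕ) (f : Fin n → ℕ) : ℕ :=
  Finset.univ.sup fun u => Finset.univ.sup fun v => f u - f v

/-- The radio-`k`-number of `C_n`: minimum span over all radio-`k`-labelings. -/
noncomputable def rn (n k : ℕ) : ℕ :=
  sInf {s | ∃ f : Fin n → ℕ, IsRadioLabeling n k f ∧ spanOf n f = s}

lemma cycleDist_comm (n : ℕ) (u v : Fin n) : cycleDist n u v = cycleDist n v u := by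
  unfold cycleDist; exact min_comm _ _

lemma pairsum {n : ℕ} [NeZero n] {u v : Fin n} (h : u ≠ v) :
    (v - u).val + (u - v).val = n := by
  have h1 : (v - u) + (u - v) = 0 := by abel
  have h2 : ((v - u) + (u - v)).val = 0 := by rw [h1]; rfl
  rw [Fin.val_add] at h2
  have h3 : (v - u) ≠ 0 := sub_ne_zero.mpr h.symm
  have h4 : (v - u).val ≠ 0 := by intro hz; exact h3 (Fin.ext (by simp [hz]))
  have h5 := (v - u).isLt
  have h6 := (u - v).isLt
  rcases Nat.lt_or_ge ((v - u).val + (u - v).val) n with hlt | hge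
  · rw [Nat.mod_eq_of_lt hlt] at h2; omega
  · rw [Nat.mod_eq_sub_mod hge, Nat.mod_eq_of_lt (by omega)] at h2; omega

lemma cycleDist_pos {n : ℕ} [NeZero n] {u v : Fin n} (h : u ≠ v) :
    1 ≤ cycleDist n u v := by
  have := pairsum h
  have h5 := (v - u).isLt
  have h6 := (u - v).isLt
  unfold cycleDist; omega

lemma keysum {n : ℕ} [NeZero n] {u v w : Fin n} (huv : u ≠ v) (hvw : v ≠ w)
    (huw : u ≠ w) : cycleDist n u v + cycleDist n v w ≤ n - 1 := by
  have h1 := pairsum huv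
  have h2 := pairsum hvw
  have h3 := pairsum huw
  have he : (v - u) + (w - v) = w - u := by abel
  have he2 : ((v - u).val + (w - v).val) % n = (w - u).val := by
    rw [← Fin.val_add, he]
  have h4 : (w - u).val ≠ 0 := by
    intro hz; exact (sub_ne_zero.mpr huw.symm) (Fin.ext (by simp [hz]))
  have h5 := (v - u).isLt
  have h6 := (w - v).isLt
  rcases Nat.lt_or_ge ((v - u).val + (w - v).val) n with hlt | hge
  · rw [Nat.mod_eq_of_lt hlt] at he2
    unfold cycleDist; omega
  · rw [Nat.mod_eq_sub_mod hge, Nat.mod_eq_of_lt (by omega)] at he2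
    unfold cycleDist; omega

/-- for `k ≥ n-3`, a strictly increasing labeling (w.r.t. the ordering
`x_0, …, x_{n-1}`) is a radio-k-labeling iff all consecutive label gaps satisfy
`f(x_{i+1}) - f(x_i) ≥ k - d(x_i, x_{i+1}) + 1`. -/
theorem stmt7 (n k : ℕ) (hn : 3 ≤ n) (hk : n - 3 ≤ k) (hk' : n / 2 ≤ k)
    (x : Fin n → Fin n) (hx : Function.Bijective x)
    (f : Fin n → ℕ) (hmono : StrictMono fun i => f (x i)) :
    IsRadioLabeling n k f ↔
      ∀ i : ℕ, ∀ (hi : i + 1 < n),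
        (k : ℤ) + 1 - cycleDist n (x ⟨i, by omega⟩) (x ⟨i + 1, hi⟩) ≤
          (f (x ⟨i + 1, hi⟩) : ℤ) - (f (x ⟨i, by omega⟩) : ℤ) := by
  haveI : NeZero n := ⟨by omega⟩
  constructor
  · intro hrad i hi
    have hne : x ⟨i, by omega⟩ ≠ x ⟨i + 1, hi⟩ := fun h => by
      have := hx.injective h
      simp [Fin.ext_iff] at this
    have := hrad _ _ hne
    have hlt : f (x ⟨i, by omega⟩) < f (x ⟨i + 1, hi⟩) :=
      hmono (show (⟨i, by omega⟩ : Fin n) < ⟨i + 1, hi⟩ by simp [Fin.lt_def])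
    rw [abs_sub_comm, abs_of_nonneg (by push_cast; omega)] at this
    exact this
  · intro h
    have key : ∀ i j : Fin n, i < j →
        (k : ℤ) + 1 - cycleDist n (x i) (x j) ≤ (f (x j) : ℤ) - (f (x i) : ℤ) := by
      intro i j hij
      have hiv : (i : ℕ) + 1 ≤ (j : ℕ) := hij
      have hjn := j.isLt
      rcases eq_or_lt_of_le hiv with heq | hlt2
      · have hj : j = ⟨(i : ℕ) + 1, by omega⟩ := by simp [Fin.ext_iff]; omega
        have := h i.val (by omega)
        rw [hj]
        simpa using this
      · -- j ≥ i + 2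
        have h1n : (i : ℕ) + 1 < n := by omega
        have h2n : (i : ℕ) + 2 < n := by omega
        have g1 := h i.val h1n
        have g2 := h ((i : ℕ) + 1) (by omega)
        have hmono2 : f (x ⟨(i : ℕ) + 2, by omega⟩) ≤ f (x j) :=
          hmono.monotone (show (⟨(i : ℕ) + 2, by omega⟩ : Fin n) ≤ j from hlt2)
        have hne01 : x ⟨(i : ℕ), by omega⟩ ≠ x ⟨(i : ℕ) + 1, h1n⟩ := fun hh => by
          have := hx.injective hh; simp [Fin.ext_iff] at this
        have hne12 : x ⟨(i : ℕ) + 1, h1n⟩ ≠ x ⟨(i : ℕ) + 2, h2n⟩ := fun hh => by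
          have := hx.injective hh; simp [Fin.ext_iff] at this
        have hne02 : x ⟨(i : ℕ), by omega⟩ ≠ x ⟨(i : ℕ) + 2, h2n⟩ := fun hh => by
          have := hx.injective hh; simp [Fin.ext_iff] at this
        have hks := keysum hne01 hne12 hne02
        have hneij : x i ≠ x j := fun hh => by
          have := hx.injective hh; exact absurd this (Fin.ne_of_lt hij)
        have hdpos := cycleDist_pos hneij
        have hieq : (⟨(i : ℕ), by omega⟩ : Fin n) = i := by simp
        rw [hieq] at g1 hne01 hne02 hks
        have hkn : n - 3 ≤ k := hk
        -- combine
        have : (k : ℤ) + 1 - cycleDist n (x i) (x j) ≤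
            ((k : ℤ) + 1 - cycleDist n (x i) (x ⟨(i : ℕ) + 1, h1n⟩)) +
            ((k : ℤ) + 1 - cycleDist n (x ⟨(i : ℕ) + 1, h1n⟩) (x ⟨(i : ℕ) + 2, h2n⟩)) := by
          have d1 := cycleDist n (x i) (x ⟨(i : ℕ) + 1, h1n⟩)
          omega
        calc (k : ℤ) + 1 - cycleDist n (x i) (x j) ≤ _ := this
          _ ≤ ((f (x ⟨(i : ℕ) + 1, h1n⟩) : ℤ) - f (x i)) +
              ((f (x ⟨(i : ℕ) + 2, h2n⟩) : ℤ) - f (x ⟨(i : ℕ) + 1, h1n⟩)) := by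
              exact add_le_add g1 g2
          _ = (f (x ⟨(i : ℕ) + 2, h2n⟩) : ℤ) - f (x i) := by ring
          _ ≤ (f (x j) : ℤ) - f (x i) := by
              have : (f (x ⟨(i : ℕ) + 2, h2n⟩) : ℤ) ≤ f (x j) := by exact_mod_cast hmono2
              omega
    intro u v huv
    obtain ⟨i, rfl⟩ := hx.surjective u
    obtain ⟨j, rfl⟩ := hx.surjective v
    have hij : i ≠ j := fun hh => huv (by rw [hh])
    rcases lt_or_gt_of_ne hij with hlt | hlt
    · have := key i j hlt
      have hmlt : f (x i) < f (x j) := hmono hlt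
      rw [abs_sub_comm, abs_of_nonneg (by push_cast; omega)]
      omega
    · have := key j i hlt
      have hmlt : f (x j) < f (x i) := hmono hlt
      rw [abs_of_nonneg (by push_cast; omega), cycleDist_comm]
      omega
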